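/- Optimal redistribution in scenario reduction: fix a discrete measure P = ∑_{i=1}^N p_i δ_{ω_i} and a nonempty proper subset J ⊂ {1,...,N} of deleted scenarios. Among all probability weights q on {1,...,N} \ J, the minimum of the transport cost to move P onto the remaining scenarios equals D_J = ∑_{i ∈ J} p_i · min_{j ∉ J} c(ω_i, ω_j), achieved by q_j = p_j + ∑_{i ∈ J, j(i)=j} p_i where j(i) ∈ argmin_{j ∉ J} c(ω_i, ω_j). -/

import Mathlib

/-! Moving every deleted scenario `i ∈ J` entirely to a nearest kept scenario `jsel i`, and
leaving the kept scenarios in place, is a feasible plan of cost `∑_{i ∈ J} p i · min_{j ∉ J} c i j`.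
Conversely, any plan onto weights supported on `Jᶜ` must ship the whole mass `p i` of a deleted
scenario to points of `Jᶜ`, each at distance at least `min_{j ∉ J} c i j`, and all other costs
are nonnegative. -/

namespace ScenarioReduction

variable {ι : Type*} [DecidableEq ι]

def redirect (J : Finset ι) (jsel : ι → ι) (i : ι) : ι :=
  if i ∈ J then jsel i else i

def redirectPlan (J : Finset ι) (jsel : ι → ι) (p : ι → ℝ) (i j : ι) : ℝ :=
  if j = redirect J jsel i then p i else 0

variable {J : Finset ι} {jsel : ι → ι} {p : ι → ℝ}

lemma redirectPlan_nonneg (hp : ∀ i, 0 ≤ p i) (i j : ι) : 0 ≤ redirectPlan J jsel p i j := by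
  unfold redirectPlan
  split_ifs
  exacts [hp i, le_rfl]

lemma redirect_eq_iff (hjsel : ∀ i ∈ J, jsel i ∉ J) (i j : ι) :
    redirect J jsel i = j ↔ j ∉ J ∧ (i = j ∨ i ∈ J ∧ jsel i = j) := by
  unfold redirect
  by_cases hi : i ∈ J
  · simp only [hi, if_true, true_and]
    constructor
    · rintro rfl; exact ⟨hjsel i hi, Or.inr rfl⟩
    · rintro ⟨hj, rfl | h⟩
      exacts [absurd hi hj, h]
  · simp only [hi, if_false, false_and, or_false]
    constructor
    · rintro rfl; exact ⟨hi, rfl⟩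
    · exact fun h => h.2

variable [Fintype ι]

lemma sum_redirectPlan_right (i : ι) : ∑ j, redirectPlan J jsel p i j = p i := by
  simp [redirectPlan]

lemma sum_redirectPlan_left (hjsel : ∀ i ∈ J, jsel i ∉ J) (j : ι) :
    ∑ i, redirectPlan J jsel p i j =
      if j ∈ J then 0 else p j + ∑ i ∈ J.filter (fun i => jsel i = j), p i := by
  have hfiber : ∑ i, redirectPlan J jsel p i j =
      ∑ i ∈ Finset.univ.filter (fun i => redirect J jsel i = j), p i := by
    simp only [redirectPlan, Finset.sum_filter, eq_comm]
  rw [hfiber]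
  split_ifs with hj
  · exact Finset.sum_eq_zero fun i hi =>
      absurd hj ((redirect_eq_iff hjsel i j).1 (Finset.mem_filter.1 hi).2).1
  · have hsplit : Finset.univ.filter (fun i => redirect J jsel i = j) =
        insert j (J.filter fun i => jsel i = j) := by
      ext i
      simp only [Finset.mem_filter, Finset.mem_univ, true_and, Finset.mem_insert,
        redirect_eq_iff hjsel, hj, not_false_eq_true]
    rw [hsplit, Finset.sum_insert fun h => hj (Finset.mem_filter.1 h).1]

lemma sum_cost_redirectPlan {c : ι → ι → ℝ} (hdiag : ∀ i, c i i = 0) :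
    ∑ i, ∑ j, c i j * redirectPlan J jsel p i j = ∑ i ∈ J, p i * c i (jsel i) := by
  have hrow : ∀ i, ∑ j, c i j * redirectPlan J jsel p i j =
      if i ∈ J then p i * c i (jsel i) else 0 := by
    intro i
    unfold redirectPlan redirect
    split_ifs <;> simp [hdiag, mul_comm]
  simp only [hrow, Finset.sum_ite_mem, Finset.univ_inter]

lemma sum_mul_inf'_le_cost {c η : ι → ι → ℝ} (hc0 : ∀ i j, 0 ≤ c i j)
    (hη0 : ∀ i j, 0 ≤ η i j) (hrow : ∀ i, ∑ j, η i j = p i) (hJ : ∀ i, ∀ j ∈ J, η i j = 0)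
    (hJc : Jᶜ.Nonempty) :
    ∑ i ∈ J, p i * Jᶜ.inf' hJc (c i) ≤ ∑ i, ∑ j, c i j * η i j := by
  have hcost0 : ∀ i j, 0 ≤ c i j * η i j := fun i j => mul_nonneg (hc0 i j) (hη0 i j)
  have hdeleted : ∀ i ∈ J, p i * Jᶜ.inf' hJc (c i) ≤ ∑ j, c i j * η i j := by
    intro i _
    have hmass : ∑ j ∈ Jᶜ, η i j = p i := by
      rw [← hrow i, ← Finset.sum_add_sum_compl J, Finset.sum_eq_zero (hJ i), zero_add]
    calc p i * Jᶜ.inf' hJc (c i) = ∑ j ∈ Jᶜ, Jᶜ.inf' hJc (c i) * η i j := by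
          rw [← Finset.mul_sum, hmass, mul_comm]
      _ ≤ ∑ j ∈ Jᶜ, c i j * η i j :=
          Finset.sum_le_sum fun j hj => mul_le_mul_of_nonneg_right (Finset.inf'_le _ hj) (hη0 i j)
      _ ≤ ∑ j, c i j * η i j :=
          Finset.sum_le_sum_of_subset_of_nonneg (Finset.subset_univ _) fun j _ _ => hcost0 i j
  calc ∑ i ∈ J, p i * Jᶜ.inf' hJc (c i) ≤ ∑ i ∈ J, ∑ j, c i j * η i j :=
        Finset.sum_le_sum hdeleted
    _ ≤ ∑ i, ∑ j, c i j * η i j :=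
        Finset.sum_le_sum_of_subset_of_nonneg (Finset.subset_univ _) fun i _ _ =>
          Finset.sum_nonneg fun j _ => hcost0 i j

end ScenarioReduction

open ScenarioReduction in
theorem stmt_19_general (N : ℕ)
    (p : Fin N → ℝ) (hp : ∀ i, 0 ≤ p i) (hp1 : ∑ i, p i = 1)
    (c : Fin N → Fin N → ℝ) (hc0 : ∀ i j, 0 ≤ c i j)
    (hdiag : ∀ i, c i i = 0)
    (J : Finset (Fin N))
    (hJc : (Jᶜ : Finset (Fin N)).Nonempty)
    (jsel : Fin N → Fin N)
    (hjsel : ∀ i ∈ J, jsel i ∈ Jᶜ ∧ ∀ j ∈ Jᶜ, c i (jsel i) ≤ c i j) :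
    IsLeast {t : ℝ | ∃ (q : Fin N → ℝ) (η : Fin N → Fin N → ℝ),
        (∀ j ∈ J, q j = 0) ∧ (∀ j, 0 ≤ q j) ∧ (∑ j, q j = 1) ∧
        (∀ i j, 0 ≤ η i j) ∧ (∀ i, ∑ j, η i j = p i) ∧ (∀ j, ∑ i, η i j = q j) ∧
        t = ∑ i, ∑ j, c i j * η i j}
      (∑ i ∈ J, p i * Jᶜ.inf' hJc (fun j => c i j)) ∧
    (∃ η : Fin N → Fin N → ℝ,
        (∀ i j, 0 ≤ η i j) ∧ (∀ i, ∑ j, η i j = p i) ∧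
        (∀ j, ∑ i, η i j =
          (if j ∈ J then 0 else p j + ∑ i ∈ J.filter (fun i => jsel i = j), p i)) ∧
        ∑ i, ∑ j, c i j * η i j = ∑ i ∈ J, p i * Jᶜ.inf' hJc (fun j => c i j)) := by
  have hkept : ∀ i ∈ J, jsel i ∉ J := fun i hi => Finset.mem_compl.1 (hjsel i hi).1
  have hnearest : ∀ i ∈ J, Jᶜ.inf' hJc (c i) = c i (jsel i) := fun i hi =>
    le_antisymm (Finset.inf'_le _ (hjsel i hi).1) (Finset.le_inf' _ _ (hjsel i hi).2)
  set η := redirectPlan J jsel p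
  have hcost : ∑ i, ∑ j, c i j * η i j = ∑ i ∈ J, p i * Jᶜ.inf' hJc (c i) := by
    rw [sum_cost_redirectPlan hdiag]
    exact Finset.sum_congr rfl fun i hi => by rw [hnearest i hi]
  refine ⟨⟨⟨fun j => ∑ i, η i j, η, fun j hj => ?_, fun j => ?_, ?_,
    redirectPlan_nonneg hp, sum_redirectPlan_right, fun _ => rfl, hcost.symm⟩, ?_⟩,
    η, redirectPlan_nonneg hp, sum_redirectPlan_right, sum_redirectPlan_left hkept, hcost⟩
  · simp [η, sum_redirectPlan_left hkept, hj]
  · exact Finset.sum_nonneg fun i _ => redirectPlan_nonneg hp i j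
  · rw [Finset.sum_comm, ← hp1]
    exact Finset.sum_congr rfl fun i _ => sum_redirectPlan_right i
  · rintro t ⟨q, η', hqJ, -, -, hη'0, hrow, hcol, rfl⟩
    refine sum_mul_inf'_le_cost hc0 hη'0 hrow (fun i j hj => ?_) hJc
    have hcolJ : ∑ k, η' k j = 0 := (hcol j).trans (hqJ j hj)
    exact (Finset.sum_eq_zero_iff_of_nonneg fun k _ => hη'0 k j).1 hcolJ i (Finset.mem_univ i)

theorem stmt_19 {Ω : Type*} (N : ℕ) (ω : Fin N → Ω)
    (p : Fin N → ℝ) (hp : ∀ i, 0 ≤ p i) (hp1 : ∑ i, p i = 1)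
    (c : Fin N → Fin N → ℝ) (hc0 : ∀ i j, 0 ≤ c i j)
    (hsym : ∀ i j, c i j = c j i) (hdiag : ∀ i, c i i = 0)
    (htri : ∀ i j k, c i j ≤ c i k + c k j)
    (J : Finset (Fin N)) (hJne : J.Nonempty) (hJprop : J ≠ Finset.univ)
    (hJc : (Jᶜ : Finset (Fin N)).Nonempty)
    (jsel : Fin N → Fin N)
    (hjsel : ∀ i ∈ J, jsel i ∈ Jᶜ ∧ ∀ j ∈ Jᶜ, c i (jsel i) ≤ c i j) :
    IsLeast {t : ℝ | ∃ (q : Fin N → ℝ) (η : Fin N → Fin N → ℝ),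
        (∀ j ∈ J, q j = 0) ∧ (∀ j, 0 ≤ q j) ∧ (∑ j, q j = 1) ∧
        (∀ i j, 0 ≤ η i j) ∧ (∀ i, ∑ j, η i j = p i) ∧ (∀ j, ∑ i, η i j = q j) ∧
        t = ∑ i, ∑ j, c i j * η i j}
      (∑ i ∈ J, p i * Jᶜ.inf' hJc (fun j => c i j)) ∧
    (∃ η : Fin N → Fin N → ℝ,
        (∀ i j, 0 ≤ η i j) ∧ (∀ i, ∑ j, η i j = p i) ∧
        (∀ j, ∑ i, η i j =
          (if j ∈ J then 0 else p j + ∑ i ∈ J.filter (fun i => jsel i = j), p i)) ∧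
        ∑ i, ∑ j, c i j * η i j = ∑ i ∈ J, p i * Jᶜ.inf' hJc (fun j => c i j)) :=
  stmt_19_general N p hp hp1 c hc0 hdiag J hJc jsel hjsel
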